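/- For every ζ₀ ∈ 𝔻 there exists a linear functional Λ : H²(𝔻) → ℂ which is not continuous, satisfies Λ(k_w) = (1 − ζ₀\overline{w})^{-1} and Λ(1 − \overline{w}·id) = 1 − \overline{w}ζ₀ for all w ∈ 𝔻 (in particular Λ(1) = 1 and Λ(1/k_w) · Λ(k_w) = 1 for every w ∈ 𝔻), and which is not multiplicative. -/

import Mathlib

open scoped BigOperators ComplexConjugate

noncomputable section

/-- The Hardy space `H²(𝔻)`, concretely realized as the space of square-summable
Taylor-coefficient sequences. -/
abbrev H2 : Type := lp (fun _ : ℕ => ℂ) 2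

/-- Evaluation of an element of `H²(𝔻)` (given by its coefficient sequence) at a point:
`f(z) = Σ_n a_n zⁿ`. -/
def evalH2 (f : H2) (z : ℂ) : ℂ := ∑' n : ℕ, f n * z ^ n

/-- A functional `Λ` on `H²(𝔻)` is multiplicative if `Λ(fg) = Λ(f)Λ(g)` whenever `f`, `g`
and an element `h` representing the pointwise product `fg` on `𝔻` all lie in `H²(𝔻)`. -/
def MultH2 (Λ : H2 → ℂ) : Prop :=
  ∀ f g h : H2, (∀ z : ℂ, ‖z‖ < 1 → evalH2 h z = evalH2 f z * evalH2 g z) →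
    Λ h = Λ f * Λ g

/-!
`Λ` is evaluation at `ζ₀` perturbed by a linear functional `δ` that vanishes on every
geometrically decaying coefficient sequence (the kernels `k_w`, the polynomials) and on
`-log (1 - z) / z`, but not on `-log (1 - z) = z · (-log (1 - z) / z)`. Then `Λ` agrees with
evaluation on `k_w` and `1 / k_w`, is not multiplicative on that product, and is discontinuous
since it agrees with evaluation on the dense polynomials without being evaluation.
Such a `δ` exists because `-log (1 - z) - c · (-log (1 - z) / z)` never decays geometrically:
`n (n + 1)` times its `n`-th coefficient is `1 + (1 - c) n`, which does not tend to `0`.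
-/

open Filter Asymptotics Topology Finset
open scoped ENNReal

lemma lp.apply_eq_tsum_of_continuous {𝕜 : Type*} [NormedField 𝕜] {p : ℝ≥0∞} [Fact (1 ≤ p)]
    (hp : p ≠ ∞) (Λ : lp (fun _ : ℕ => 𝕜) p →ₗ[𝕜] 𝕜) (hΛ : Continuous Λ)
    (x : lp (fun _ : ℕ => 𝕜) p) : Λ x = ∑' n, x n * Λ (lp.single p n 1) := by
  refine (((lp.hasSum_single hp x).map Λ hΛ).congr_fun fun n => ?_).tsum_eq.symm
  rw [Function.comp_apply, ← smul_eq_mul, ← map_smul,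
    ← lp.single_smul (E := fun _ : ℕ => 𝕜), smul_eq_mul, mul_one]

namespace H2

lemma summable_mul_pow (x : H2) {z : ℂ} (hz : ‖z‖ < 1) : Summable fun n => x n * z ^ n := by
  refine Summable.of_norm_bounded ((summable_geometric_of_lt_one (norm_nonneg z) hz).mul_left ‖x‖)
    fun n => ?_
  rw [norm_mul, norm_pow]
  exact mul_le_mul_of_nonneg_right (lp.norm_apply_le_norm two_ne_zero x n) (by positivity)

def evalₗ (z : ℂ) (hz : ‖z‖ < 1) : H2 →ₗ[ℂ] ℂ where
  toFun x := evalH2 x z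
  map_add' x y := by
    simp only [evalH2, lp.coeFn_add, Pi.add_apply, add_mul]
    exact (summable_mul_pow x hz).tsum_add (summable_mul_pow y hz)
  map_smul' c x := by
    simp only [evalH2, lp.coeFn_smul, Pi.smul_apply, smul_eq_mul, mul_assoc, RingHom.id_apply]
    exact tsum_mul_left

lemma evalₗ_apply (z : ℂ) (hz : ‖z‖ < 1) (x : H2) : evalₗ z hz x = evalH2 x z := rfl

lemma evalH2_eq_sum_range {x : H2} {N : ℕ} (hx : ∀ n ≥ N, x n = 0) (z : ℂ) :
    evalH2 x z = ∑ n ∈ range N, x n * z ^ n :=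
  tsum_eq_sum fun n hn => by rw [hx n (by simpa using hn), zero_mul]

lemma evalH2_single (i : ℕ) (a z : ℂ) : evalH2 (lp.single 2 i a) z = a * z ^ i := by
  rw [evalH2, tsum_eq_single i fun n hn => by
    rw [lp.single_apply_ne (E := fun _ : ℕ => ℂ) 2 i a hn, zero_mul],
    lp.single_apply_self (E := fun _ : ℕ => ℂ)]

lemma evalH2_geometric {x : H2} {c z : ℂ} (hx : ∀ n, x n = c ^ n) (hc : ‖c‖ < 1) (hz : ‖z‖ < 1) :
    evalH2 x z = (1 - z * c)⁻¹ := by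
  simp only [evalH2, hx, ← mul_pow, mul_comm c z]
  refine tsum_geometric_of_norm_lt_one ?_
  rw [norm_mul]
  exact mul_lt_one_of_nonneg_of_lt_one_left (norm_nonneg _) hz hc.le

/-- Coefficient sequences of the functions holomorphic on a neighbourhood of the closed disc. -/
def geometricDecay : Submodule ℂ H2 where
  carrier := {x | ∃ r ∈ Set.Ico (0 : ℝ) 1, (x : ℕ → ℂ) =O[atTop] (r ^ ·)}
  zero_mem' := ⟨0, by simp, isBigO_zero _ _⟩
  add_mem' := by
    rintro x y ⟨r, hr, hx⟩ ⟨s, hs, hy⟩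
    have mono {t : ℝ} (ht : 0 ≤ t) (hle : t ≤ max r s) : (t ^ ·) =O[atTop] (max r s ^ · : ℕ → ℝ) :=
      isBigO_of_le _ fun n => by
        simp only [norm_pow, Real.norm_eq_abs, abs_of_nonneg ht, abs_of_nonneg (ht.trans hle)]
        exact pow_le_pow_left₀ ht hle n
    exact ⟨max r s, ⟨le_max_of_le_left hr.1, max_lt hr.2 hs.2⟩,
      (hx.trans (mono hr.1 (le_max_left r s))).add (hy.trans (mono hs.1 (le_max_right r s)))⟩
  smul_mem' := by
    rintro c x ⟨r, hr, hx⟩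
    exact ⟨r, hr, hx.const_smul_left c⟩

lemma mem_geometricDecay_of_eventually_zero {x : H2} {N : ℕ} (hx : ∀ n ≥ N, x n = 0) :
    x ∈ geometricDecay :=
  ⟨0, by simp, (isBigO_zero _ _).congr' (eventually_atTop.2 ⟨N, fun n hn => (hx n hn).symm⟩)
    EventuallyEq.rfl⟩

lemma single_mem_geometricDecay (i : ℕ) (a : ℂ) : lp.single 2 i a ∈ geometricDecay :=
  mem_geometricDecay_of_eventually_zero (N := i + 1) fun n hn =>
    lp.single_apply_ne (E := fun _ : ℕ => ℂ) 2 i a (by omega)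

lemma mem_geometricDecay_of_geometric {x : H2} {c : ℂ} (hx : ∀ n, x n = c ^ n) (hc : ‖c‖ < 1) :
    x ∈ geometricDecay :=
  ⟨‖c‖, ⟨norm_nonneg c, hc⟩, isBigO_of_le _ fun n => by simp [hx]⟩

lemma tendsto_mul_of_mem_geometricDecay {u : H2} (hu : u ∈ geometricDecay) :
    Tendsto (fun n : ℕ => ((n : ℂ) * (n + 1)) * u n) atTop (𝓝 0) := by
  obtain ⟨r, ⟨hr0, hr1⟩, hu⟩ := hu
  have hr : |r| < 1 := by rwa [abs_of_nonneg hr0]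
  have hpoly : (fun n : ℕ => (n : ℂ) * (n + 1)) =O[atTop] (fun n : ℕ => (n : ℝ) * (n + 1)) :=
    isBigO_of_le _ fun n => by norm_cast
  refine (hpoly.mul hu).trans_tendsto ?_
  have := (tendsto_pow_const_mul_const_pow_of_abs_lt_one 2 hr).add
    (tendsto_pow_const_mul_const_pow_of_abs_lt_one 1 hr)
  rw [add_zero] at this
  exact this.congr fun n => by ring

lemma memℓp_inv_natCast : Memℓp (fun n : ℕ => (n : ℂ)⁻¹) 2 := by
  refine memℓp_gen ?_
  simp [Real.summable_nat_pow_inv]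

lemma memℓp_inv_natCast_add_one : Memℓp (fun n : ℕ => ((n + 1 : ℕ) : ℂ)⁻¹) 2 :=
  memℓp_gen <| (summable_nat_add_iff 1).2 <| memℓp_inv_natCast.summable (by norm_num)

/-- `-log (1 - z)`; its constant term is the junk value `(0 : ℂ)⁻¹ = 0`. -/
def invNat : H2 := ⟨_, memℓp_inv_natCast⟩

/-- `-log (1 - z) / z`. -/
def invNatAddOne : H2 := ⟨_, memℓp_inv_natCast_add_one⟩

lemma evalH2_invNat {z : ℂ} (hz : ‖z‖ < 1) : evalH2 invNat z = z * evalH2 invNatAddOne z := by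
  rw [evalH2, (summable_mul_pow invNat hz).tsum_eq_zero_add, evalH2, ← tsum_mul_left]
  simp only [invNat, invNatAddOne, Nat.cast_zero, inv_zero, zero_mul, zero_add, Nat.cast_succ,
    pow_succ]
  exact tsum_congr fun n => by ring

lemma invNat_notMem_sup : invNat ∉ geometricDecay ⊔ (ℂ ∙ invNatAddOne) := by
  rw [Submodule.mem_sup]
  rintro ⟨u, hu, _, hc, hsum⟩
  obtain ⟨c, rfl⟩ := Submodule.mem_span_singleton.1 hc
  have hcoeff : ∀ n : ℕ, 1 ≤ n → ((n : ℂ) * (n + 1)) * u n = 1 + (1 - c) * n := by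
    intro n hn
    have hn0 : (n : ℂ) ≠ 0 := by exact_mod_cast Nat.one_le_iff_ne_zero.1 hn
    have hn1 : (n : ℂ) + 1 ≠ 0 := by exact_mod_cast n.succ_ne_zero
    have := congrArg (fun x : H2 => x n) hsum
    simp only [lp.coeFn_add, lp.coeFn_smul, Pi.add_apply, Pi.smul_apply, smul_eq_mul, invNat,
      invNatAddOne, Nat.cast_succ] at this
    rw [eq_sub_of_add_eq this]
    field_simp
    ring
  have hlim : Tendsto (fun n : ℕ => 1 + (1 - c) * n) atTop (𝓝 0) :=
    (tendsto_mul_of_mem_geometricDecay hu).congr' (eventually_atTop.2 ⟨1, hcoeff⟩)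
  have hc : 1 - c = 0 := by
    have := (hlim.comp (tendsto_add_atTop_nat 1)).sub hlim
    simp only [Function.comp_def, Nat.cast_succ, sub_zero] at this
    exact (tendsto_nhds_unique (this.congr fun n => by ring) tendsto_const_nhds).symm
  simp only [hc, zero_mul, add_zero] at hlim
  exact one_ne_zero (tendsto_nhds_unique tendsto_const_nhds hlim)

lemma exists_dual_le_ker_invNat_ne_zero :
    ∃ δ : Module.Dual ℂ H2, geometricDecay ≤ LinearMap.ker δ ∧ δ invNatAddOne = 0 ∧
      δ invNat ≠ 0 := by
  obtain ⟨δ, hδinvNat, hδ⟩ :=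
    Submodule.exists_dual_map_eq_bot_of_notMem invNat_notMem_sup inferInstance
  rw [← LinearMap.le_ker_iff_map, sup_le_iff, Submodule.span_singleton_le_iff_mem] at hδ
  exact ⟨δ, hδ.1, hδ.2, hδinvNat⟩

section Perturbation

variable {ζ₀ : ℂ} (hζ₀ : ‖ζ₀‖ < 1) {δ : Module.Dual ℂ H2} (hδ : geometricDecay ≤ LinearMap.ker δ)
include hδ

lemma evalₗ_add_apply_of_mem {x : H2} (hx : x ∈ geometricDecay) :
    (evalₗ ζ₀ hζ₀ + δ) x = evalH2 x ζ₀ := by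
  rw [LinearMap.add_apply, hδ hx, add_zero, evalₗ_apply]

lemma not_continuous_evalₗ_add {x : H2} (hx : δ x ≠ 0) : ¬ Continuous ⇑(evalₗ ζ₀ hζ₀ + δ) := by
  intro hcont
  have := lp.apply_eq_tsum_of_continuous ENNReal.ofNat_ne_top _ hcont x
  simp only [evalₗ_add_apply_of_mem hζ₀ hδ (single_mem_geometricDecay _ _), evalH2_single,
    one_mul] at this
  exact hx (by simpa [evalH2, evalₗ] using this)

lemma not_multH2_evalₗ_add (hδ₁ : δ invNatAddOne = 0) (hδ₂ : δ invNat ≠ 0) :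
    ¬ MultH2 ⇑(evalₗ ζ₀ hζ₀ + δ) := by
  intro hmul
  have := hmul invNatAddOne (lp.single 2 1 1) invNat fun z hz => by
    rw [evalH2_invNat hz, evalH2_single, one_mul, pow_one, mul_comm]
  simp only [LinearMap.add_apply, evalₗ_apply, hδ₁, evalH2_single, evalH2_invNat hζ₀,
    LinearMap.mem_ker.1 (hδ (single_mem_geometricDecay 1 1))] at this
  exact hδ₂ (by linear_combination this)

end Perturbation

end H2

open H2

/-- for every `ζ₀ ∈ 𝔻` there is a *discontinuous* linear functional `Λ` on
`H²(𝔻)` with `Λ(k_w) = (1 - ζ₀ conj w)⁻¹` and `Λ(1 - conj w · id) = 1 - conj w ζ₀` for all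
`w ∈ 𝔻` (in particular `Λ(1) = 1` and `Λ(1/k_w)·Λ(k_w) = 1`), which is not multiplicative.
Here `k_w` has coefficient sequence `n ↦ conj w ^ n` and `1 - conj w · id` has coefficient
sequence `(1, -conj w, 0, 0, …)`. -/
theorem stmt12 (ζ₀ : ℂ) (hζ₀ : ‖ζ₀‖ < 1) :
    ∃ Λ : H2 →ₗ[ℂ] ℂ,
      ¬ Continuous Λ ∧
      (∀ w : ℂ, ‖w‖ < 1 → ∀ kw : H2, (∀ n : ℕ, kw n = conj w ^ n) →
        Λ kw = (1 - ζ₀ * conj w)⁻¹) ∧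
      (∀ w : ℂ, ‖w‖ < 1 → ∀ φw : H2,
        (∀ n : ℕ, φw n = if n = 0 then 1 else if n = 1 then -conj w else 0) →
        Λ φw = 1 - conj w * ζ₀) ∧
      (∀ one : H2, (∀ n : ℕ, one n = if n = 0 then 1 else 0) → Λ one = 1) ∧
      (∀ w : ℂ, ‖w‖ < 1 → ∀ kw φw : H2, (∀ n : ℕ, kw n = conj w ^ n) →
        (∀ n : ℕ, φw n = if n = 0 then 1 else if n = 1 then -conj w else 0) →
        Λ φw * Λ kw = 1) ∧
      ¬ MultH2 Λ := by
  obtain ⟨δ, hδ, hδ₁, hδ₂⟩ := exists_dual_le_ker_invNat_ne_zero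
  have hΛ {x : H2} (hx : x ∈ geometricDecay) : (evalₗ ζ₀ hζ₀ + δ) x = evalH2 x ζ₀ :=
    evalₗ_add_apply_of_mem hζ₀ hδ hx
  have hk (w : ℂ) (hw : ‖w‖ < 1) (kw : H2) (hkw : ∀ n, kw n = conj w ^ n) :
      (evalₗ ζ₀ hζ₀ + δ) kw = (1 - ζ₀ * conj w)⁻¹ := by
    rw [← Complex.norm_conj] at hw
    rw [hΛ (mem_geometricDecay_of_geometric hkw hw), evalH2_geometric hkw hw hζ₀]
  have hφ (w : ℂ) (_ : ‖w‖ < 1) (φw : H2)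
      (hφw : ∀ n, φw n = if n = 0 then 1 else if n = 1 then -conj w else 0) :
      (evalₗ ζ₀ hζ₀ + δ) φw = 1 - conj w * ζ₀ := by
    have hfin : ∀ n ≥ 2, φw n = 0 := fun n hn => by rw [hφw, if_neg (by omega), if_neg (by omega)]
    rw [hΛ (mem_geometricDecay_of_eventually_zero hfin), evalH2_eq_sum_range hfin]
    simp [Finset.sum_range_succ, hφw, mul_comm, sub_eq_add_neg]
  refine ⟨evalₗ ζ₀ hζ₀ + δ, not_continuous_evalₗ_add hζ₀ hδ hδ₂, hk, hφ, fun one hone => ?_,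
    fun w hw kw φw hkw hφw => ?_, not_multH2_evalₗ_add hζ₀ hδ hδ₁ hδ₂⟩
  · have hfin : ∀ n ≥ 1, one n = 0 := fun n hn => by rw [hone, if_neg (by omega)]
    rw [hΛ (mem_geometricDecay_of_eventually_zero hfin), evalH2_eq_sum_range hfin]
    simp [hone]
  · have hζw : ‖ζ₀ * conj w‖ < 1 := by
      rw [norm_mul, Complex.norm_conj]
      exact mul_lt_one_of_nonneg_of_lt_one_left (norm_nonneg _) hζ₀ hw.le
    rw [hφ w hw φw hφw, hk w hw kw hkw, mul_comm (conj w), mul_inv_cancel₀]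
    exact sub_ne_zero.2 fun h => by simp [← h] at hζw
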